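/- Let γ ∈ ℝ, V(y) := γ y + U(y), Ω := curl U, and suppose U, P : ℝ³ → ℝ are smooth and satisfy the self-similar Euler equation (1-γ)U + γ(y·∇)U + (U·∇)U + ∇P = 0 with div U = 0. Define the Bernoulli function H(y) := ½|γy + U(y)|² + P(y) + (γ(γ-1)/2)|y|². Then V·∇H = (2γ - 1)|V|² pointwise. -/

import Mathlib

noncomputable def dot3 (u v : Fin 3 → ℝ) : ℝ := ∑ i, u i * v i

noncomputable def grad3 (f : (Fin 3 → ℝ) → ℝ) (y : Fin 3 → ℝ) : Fin 3 → ℝ :=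
  fun i => fderiv ℝ f y (Pi.single i 1)

lemma dot3_add_right (u v w : Fin 3 → ℝ) : dot3 u (v + w) = dot3 u v + dot3 u w := by
  simp [dot3, mul_add, Finset.sum_add_distrib]

lemma dot3_smul_right (c : ℝ) (u v : Fin 3 → ℝ) : dot3 u (c • v) = c * dot3 u v := by
  simp [dot3, Finset.mul_sum, mul_left_comm]

lemma dot3_neg_right (u v : Fin 3 → ℝ) : dot3 u (-v) = -dot3 u v := by
  simp [dot3, Finset.sum_neg_distrib]

lemma dot3_comm (u v : Fin 3 → ℝ) : dot3 u v = dot3 v u := by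
  simp [dot3, mul_comm]

open ContinuousLinearMap in
lemma dirH (γ : ℝ) (U : (Fin 3 → ℝ) → (Fin 3 → ℝ)) (P : (Fin 3 → ℝ) → ℝ)
    (hU : ContDiff ℝ (⊤ : ℕ∞) U) (hP : ContDiff ℝ (⊤ : ℕ∞) P) (y v : Fin 3 → ℝ) :
    fderiv ℝ (fun z => (1 / 2) * dot3 (γ • z + U z) (γ • z + U z) + P z
      + (γ * (γ - 1) / 2) * dot3 z z) y v
    = dot3 (γ • y + U y) (γ • v + fderiv ℝ U y v) + fderiv ℝ P y v
      + γ * (γ - 1) * dot3 y v := by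
  have hU' : HasFDerivAt U (fderiv ℝ U y) y := (hU.differentiable (by simp) y).hasFDerivAt
  have hP' : HasFDerivAt P (fderiv ℝ P y) y := (hP.differentiable (by simp) y).hasFDerivAt
  set D := fderiv ℝ U y with hD
  have hF : ∀ j : Fin 3, HasFDerivAt (fun z : Fin 3 → ℝ => γ * z j + U z j)
      (γ • (proj j : (Fin 3 → ℝ) →L[ℝ] ℝ) + (proj j : (Fin 3 → ℝ) →L[ℝ] ℝ).comp D) y := by
    intro j
    have h1 : HasFDerivAt (fun z : Fin 3 → ℝ => z j)
        (proj j : (Fin 3 → ℝ) →L[ℝ] ℝ) y :=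
      (proj (R := ℝ) (φ := fun _ : Fin 3 => ℝ) j).hasFDerivAt
    have h2 : HasFDerivAt (fun z : Fin 3 → ℝ => U z j)
        ((proj j : (Fin 3 → ℝ) →L[ℝ] ℝ).comp D) y :=
      (proj (R := ℝ) (φ := fun _ : Fin 3 => ℝ) j).hasFDerivAt.comp y hU'
    exact (h1.const_mul γ).add h2
  have hq : HasFDerivAt (fun z : Fin 3 → ℝ => ∑ j : Fin 3, (γ * z j + U z j) * (γ * z j + U z j))
      (∑ j : Fin 3, ((γ * y j + U y j) • (γ • (proj j : (Fin 3 → ℝ) →L[ℝ] ℝ) + (proj j : (Fin 3 → ℝ) →L[ℝ] ℝ).comp D)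
        + (γ * y j + U y j) • (γ • (proj j : (Fin 3 → ℝ) →L[ℝ] ℝ) + (proj j : (Fin 3 → ℝ) →L[ℝ] ℝ).comp D))) y :=
    HasFDerivAt.fun_sum fun j _ => (hF j).fun_mul (hF j)
  have hr : HasFDerivAt (fun z : Fin 3 → ℝ => ∑ j : Fin 3, z j * z j)
      (∑ j : Fin 3, ((y j) • (proj j : (Fin 3 → ℝ) →L[ℝ] ℝ) + (y j) • (proj j : (Fin 3 → ℝ) →L[ℝ] ℝ))) y :=
    HasFDerivAt.fun_sum fun j _ =>
      HasFDerivAt.fun_mul (c' := (proj j : (Fin 3 → ℝ) →L[ℝ] ℝ))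
        ((proj (R := ℝ) (φ := fun _ : Fin 3 => ℝ) j).hasFDerivAt)
        ((proj (R := ℝ) (φ := fun _ : Fin 3 => ℝ) j).hasFDerivAt)
  have htot := ((hq.const_mul (1/2 : ℝ)).fun_add hP').fun_add (hr.const_mul (γ * (γ - 1) / 2))
  have hfun : (fun z => (1 / 2) * dot3 (γ • z + U z) (γ • z + U z) + P z
      + (γ * (γ - 1) / 2) * dot3 z z)
      = fun z : Fin 3 → ℝ => (1/2) * (∑ j : Fin 3, (γ * z j + U z j) * (γ * z j + U z j)) + P z
        + (γ * (γ - 1) / 2) * (∑ j : Fin 3, z j * z j) := by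
    funext z
    simp [dot3]
  rw [hfun, htot.fderiv]
  simp only [ContinuousLinearMap.add_apply, ContinuousLinearMap.smul_apply,
    ContinuousLinearMap.coe_sum', Finset.sum_apply, ContinuousLinearMap.coe_comp',
    Function.comp_apply, proj_apply, smul_eq_mul, dot3, Pi.add_apply, Pi.smul_apply]
  rw [Fin.sum_univ_three, Fin.sum_univ_three, Fin.sum_univ_three, Fin.sum_univ_three]
  ring

theorem stmt_5 (γ : ℝ)
    (U : (Fin 3 → ℝ) → (Fin 3 → ℝ)) (P : (Fin 3 → ℝ) → ℝ)
    (hU : ContDiff ℝ (⊤ : ℕ∞) U) (hP : ContDiff ℝ (⊤ : ℕ∞) P)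
    (hdiv : ∀ y : Fin 3 → ℝ, ∑ i : Fin 3, fderiv ℝ U y (Pi.single i 1) i = 0)
    (heuler : ∀ y : Fin 3 → ℝ,
      (1 - γ) • U y + fderiv ℝ U y (γ • y) + fderiv ℝ U y (U y) + grad3 P y = 0)
    (V : (Fin 3 → ℝ) → (Fin 3 → ℝ)) (hV : ∀ y, V y = γ • y + U y)
    (H : (Fin 3 → ℝ) → ℝ)
    (hH : ∀ y, H y = (1 / 2) * dot3 (γ • y + U y) (γ • y + U y) + P y
      + (γ * (γ - 1) / 2) * dot3 y y) :
    ∀ y : Fin 3 → ℝ, dot3 (V y) (grad3 H y) = (2 * γ - 1) * dot3 (V y) (V y) := by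
  intro y
  have hdecomp : ∀ w : Fin 3 → ℝ, w = ∑ i : Fin 3, w i • (Pi.single i 1 : Fin 3 → ℝ) := by
    intro w; funext j
    simp [Finset.sum_apply, Pi.single_apply, Finset.sum_ite_eq]
  have hlin : ∀ (L : (Fin 3 → ℝ) →L[ℝ] ℝ) (w : Fin 3 → ℝ),
      L w = ∑ i : Fin 3, w i * L ((Pi.single i 1 : Fin 3 → ℝ)) := by
    intro L w
    conv_lhs => rw [hdecomp w]
    rw [map_sum]
    simp
  have hHeq : H = fun z => (1 / 2) * dot3 (γ • z + U z) (γ • z + U z) + P z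
      + (γ * (γ - 1) / 2) * dot3 z z := funext hH
  have key : dot3 (V y) (grad3 H y) = fderiv ℝ H y (V y) := by
    rw [hlin (fderiv ℝ H y) (V y)]
    simp [dot3, grad3]
  have keyP : dot3 (V y) (grad3 P y) = fderiv ℝ P y (V y) := by
    rw [hlin (fderiv ℝ P y) (V y)]
    simp [dot3, grad3]
  have hDV : fderiv ℝ U y (γ • y) + fderiv ℝ U y (U y) = fderiv ℝ U y (V y) := by
    rw [hV, map_add]
  have hgradP : grad3 P y = -((1 - γ) • U y + fderiv ℝ U y (V y)) := by
    have h0 := heuler y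
    have : ((1 - γ) • U y + (fderiv ℝ U y (γ • y) + fderiv ℝ U y (U y))) + grad3 P y = 0 := by
      rw [← h0]; abel
    rw [hDV] at this
    linear_combination this
  rw [key, hHeq, dirH γ U P hU hP y (V y)]
  have hPV : fderiv ℝ P y (V y) = -((1 - γ) * dot3 (V y) (U y) + dot3 (V y) (fderiv ℝ U y (V y))) := by
    rw [← keyP, hgradP, dot3_neg_right, dot3_add_right, dot3_smul_right]
  have hVV : dot3 (V y) (V y) = γ * dot3 (V y) y + dot3 (V y) (U y) := by
    have h := dot3_add_right (V y) (γ • y) (U y)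
    rw [dot3_smul_right, ← hV y] at h
    exact h
  have h1 : dot3 (γ • y + U y) (γ • V y + fderiv ℝ U y (V y))
      = γ * dot3 (V y) (V y) + dot3 (V y) (fderiv ℝ U y (V y)) := by
    rw [← hV y, dot3_add_right, dot3_smul_right]
  rw [h1, hPV, dot3_comm y (V y), hVV]
  ring
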